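/- Let Q be a finite quiver without oriented cycles, β a dimension vector, σ ∈ C(Q,β), and let W ∈ Rep(Q,β)^{ss}_σ be σ-polystable. Then σ lies in the relative interior of the orbit cone Ω(W). -/

import Mathlib

open scoped BigOperators

namespace QuiverGIT

noncomputable section

variable {Q0 Q1 : Type} [Fintype Q0] [Fintype Q1]

/-- The representation space `Rep(Q,β)` of a quiver with vertex set `Q0`, arrow set `Q1`,
tail map `tl` and head map `hd`, for the dimension vector `β`. -/
abbrev RepSpace (tl hd : Q1 → Q0) (β : Q0 → ℕ) : Type :=
  ∀ a : Q1, Matrix (Fin (β (hd a))) (Fin (β (tl a))) ℂ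

/-- The quiver has no oriented cycles. -/
def NoOrientedCycles (tl hd : Q1 → Q0) : Prop :=
  ∀ (n : ℕ) (c : Fin (n + 1) → Q1),
    (∀ i : Fin n, hd (c i.castSucc) = tl (c i.succ)) → hd (c (Fin.last n)) ≠ tl (c 0)

/-- Pairing `σ(γ) = ∑ σ(x) γ(x)` of a real weight with a dimension vector. -/
def wt (σ : Q0 → ℝ) (γ : Q0 → ℕ) : ℝ := ∑ x, σ x * γ x

/-- The weight has integer coordinates. -/
def IsIntegralWt (σ : Q0 → ℝ) : Prop := ∀ x, ∃ n : ℤ, σ x = n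

variable {tl hd : Q1 → Q0} {β : Q0 → ℕ}

/-- A family of subspaces `S x ≤ ℂ^{β(x)}` is a subrepresentation of `W`. -/
def IsSubrep (W : RepSpace tl hd β) (S : ∀ x, Submodule ℂ (Fin (β x) → ℂ)) : Prop :=
  ∀ a : Q1, ∀ v ∈ S (tl a), (W a).mulVec v ∈ S (hd a)

/-- The dimension vector of a family of subspaces. -/
def dimVec (S : ∀ x : Q0, Submodule ℂ (Fin (β x) → ℂ)) : Q0 → ℕ :=
  fun x => Module.finrank ℂ (S x)

/-- `W` is `σ`-semi-stable. -/
def Semistable (σ : Q0 → ℝ) (W : RepSpace tl hd β) : Prop :=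
  wt σ β = 0 ∧
    ∀ S : ∀ x, Submodule ℂ (Fin (β x) → ℂ), IsSubrep W S → wt σ (dimVec S) ≤ 0

/-- `W` is `σ`-stable. -/
def Stable (σ : Q0 → ℝ) (W : RepSpace tl hd β) : Prop :=
  wt σ β = 0 ∧
    ∀ S : ∀ x, Submodule ℂ (Fin (β x) → ℂ), IsSubrep W S →
      S ≠ (fun _ => ⊥) → S ≠ (fun _ => ⊤) → wt σ (dimVec S) < 0

/-- The set `Rep(Q,β)^{ss}_σ` of `σ`-semi-stable representations. -/
def ssSet (tl hd : Q1 → Q0) (β : Q0 → ℕ) (σ : Q0 → ℝ) : Set (RepSpace tl hd β) :=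
  {W | Semistable σ W}

/-- `β₁ ↪ β` : every `β`-dimensional representation has a subrepresentation of
dimension vector `β₁`. -/
def Embeds (tl hd : Q1 → Q0) (β β₁ : Q0 → ℕ) : Prop :=
  ∀ W : RepSpace tl hd β, ∃ S : ∀ x, Submodule ℂ (Fin (β x) → ℂ),
    IsSubrep W S ∧ ∀ x, Module.finrank ℂ (S x) = β₁ x

/-- The cone `C(Q,β)` of effective weights. -/
def EffCone (tl hd : Q1 → Q0) (β : Q0 → ℕ) : Set (Q0 → ℝ) :=
  {σ | wt σ β = 0 ∧ ∀ β₁ : Q0 → ℕ, Embeds tl hd β β₁ → wt σ β₁ ≤ 0}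

/-- The action of `GL(β) = ∏ GL(β(x))` on `Rep(Q,β)` by simultaneous conjugation. -/
def glAct (g : ∀ x, GL (Fin (β x)) ℂ) (W : RepSpace tl hd β) : RepSpace tl hd β :=
  fun a => (g (hd a)).val * W a * ((g (tl a))⁻¹).val

/-- The `GL(β)`-orbit of `W`. -/
def glOrbit (W : RepSpace tl hd β) : Set (RepSpace tl hd β) :=
  {V | ∃ g, V = glAct g W}

/-- The coordinates of a point of `Rep(Q,β)`. -/
def coordFn (W : RepSpace tl hd β) : (Σ a : Q1, Fin (β (hd a)) × Fin (β (tl a))) → ℂ :=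
  fun p => W p.1 p.2.1 p.2.2

/-- The Zariski closure of a subset of `Rep(Q,β)`: the set of points where every
polynomial vanishing on the subset vanishes. -/
def zClosure (Z : Set (RepSpace tl hd β)) : Set (RepSpace tl hd β) :=
  {V | ∀ p : MvPolynomial ((a : Q1) × (Fin (β (hd a)) × Fin (β (tl a)))) ℂ,
      (∀ U ∈ Z, MvPolynomial.eval (coordFn U) p = 0) →
        MvPolynomial.eval (coordFn V) p = 0}

/-- `W` is `σ`-polystable : it is `σ`-semi-stable and its `GL(β)`-orbit is
(Zariski) closed in `Rep(Q,β)^{ss}_σ`. -/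
def Polystable (σ : Q0 → ℝ) (W : RepSpace tl hd β) : Prop :=
  Semistable σ W ∧ zClosure (glOrbit W) ∩ ssSet tl hd β σ = glOrbit W

/-- The orbit cone `Ω(W)` of a representation `W`. -/
def OmegaCone (W : RepSpace tl hd β) : Set (Q0 → ℝ) :=
  {σ | Semistable σ W}

/-- The GIT-cone `C(σ) = {σ' ∈ ℝ^{Q_0} : Rep(Q,β)^{ss}_σ ⊆ Rep(Q,β)^{ss}_{σ'}}`. -/
def gitCone (tl hd : Q1 → Q0) (β : Q0 → ℕ) (σ : Q0 → ℝ) : Set (Q0 → ℝ) :=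
  {σ' | ssSet tl hd β σ ⊆ ssSet tl hd β σ'}

/-- The GIT-cone `C(σ) = {σ' ∈ C(Q,β) : Rep(Q,β)^{ss}_σ ⊆ Rep(Q,β)^{ss}_{σ'}}`. -/
def gitConeE (tl hd : Q1 → Q0) (β : Q0 → ℕ) (σ : Q0 → ℝ) : Set (Q0 → ℝ) :=
  {σ' | σ' ∈ EffCone tl hd β ∧ ssSet tl hd β σ ⊆ ssSet tl hd β σ'}

/-- A rational convex polyhedral cone in `ℝ^{Q_0}` : a set cut out by finitely many
homogeneous linear inequalities with rational coefficients. -/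
def IsRatPolyCone (C : Set (Q0 → ℝ)) : Prop :=
  ∃ s : Finset (Q0 → ℚ), C = {σ | ∀ v ∈ s, (∑ x, σ x * (v x : ℝ)) ≤ 0}

/-- `F` is a face of the cone `C`, cut out by a supporting linear functional. -/
def IsFaceOf (F C : Set (Q0 → ℝ)) : Prop :=
  ∃ ℓ : (Q0 → ℝ) →ₗ[ℝ] ℝ, (∀ σ ∈ C, ℓ σ ≤ 0) ∧ F = {σ ∈ C | ℓ σ = 0}

/-- The restriction of `W` to the subrepresentation `T` is a `σ`-stable representation
(subrepresentations of `W|_T` are exactly the subrepresentations of `W` contained in `T`). -/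
def IsStableOn (σ : Q0 → ℝ) (W : RepSpace tl hd β)
    (T : ∀ x, Submodule ℂ (Fin (β x) → ℂ)) : Prop :=
  wt σ (dimVec T) = 0 ∧
    ∀ U : ∀ x, Submodule ℂ (Fin (β x) → ℂ), IsSubrep W U → (∀ x, U x ≤ T x) →
      U ≠ (fun _ => ⊥) → U ≠ T → wt σ (dimVec U) < 0

/-- `W` is a direct sum of `σ`-stable representations : `ℂ^β` decomposes as an internal
direct sum of subrepresentations on each of which `W` restricts to a `σ`-stable
representation. -/
def IsDirectSumOfStables (σ : Q0 → ℝ) (W : RepSpace tl hd β) : Prop :=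
  ∃ (n : ℕ) (T : Fin n → ∀ x, Submodule ℂ (Fin (β x) → ℂ)),
    (∀ i, IsSubrep W (T i)) ∧
    (∀ x, iSupIndep fun i => T i x) ∧
    (∀ x, (⨆ i, T i x) = ⊤) ∧
    ∀ i, IsStableOn σ W (T i)

/-- The factor `T/S` of two nested subrepresentations `S ≤ T` of `W` is a `σ`-stable
representation (subrepresentations of `T/S` correspond to intermediate
subrepresentations `S ≤ U ≤ T` of `W`, with `d_{U/S} = d_U - d_S`). -/
def FactorStable (σ : Q0 → ℝ) (W : RepSpace tl hd β)
    (S T : ∀ x, Submodule ℂ (Fin (β x) → ℂ)) : Prop :=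
  wt σ (dimVec T) - wt σ (dimVec S) = 0 ∧
    ∀ U : ∀ x, Submodule ℂ (Fin (β x) → ℂ), IsSubrep W U →
      (∀ x, S x ≤ U x) → (∀ x, U x ≤ T x) → U ≠ S → U ≠ T →
        wt σ (dimVec U) - wt σ (dimVec S) < 0

/-- A Jordan–Hölder filtration `0 = W_0 ⊊ W_1 ⊊ ⋯ ⊊ W_l = W` of `W` in the category of
`σ`-semi-stable representations: all factors `W_i/W_{i-1}` are `σ`-stable. -/
def IsJHFiltration (σ : Q0 → ℝ) (W : RepSpace tl hd β) (l : ℕ)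
    (S : Fin (l + 1) → ∀ x, Submodule ℂ (Fin (β x) → ℂ)) : Prop :=
  (∀ i, IsSubrep W (S i)) ∧
  (∀ x, S 0 x = ⊥) ∧
  (∀ x, S (Fin.last l) x = ⊤) ∧
  (∀ i : Fin l, ∀ x, S i.castSucc x ≤ S i.succ x) ∧
  (∀ i : Fin l, S i.castSucc ≠ S i.succ) ∧
  (∀ i : Fin l, FactorStable σ W (S i.castSucc) (S i.succ))

/-- `V` is isomorphic to the associated graded representation
`⊕_{i=1}^{l} S_i/S_{i-1}` of the filtration `S` of `W` : there are linear maps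
`f i x : ℂ^{β(x)} → ℂ^{β(x)}` which vanish on `S_{i-1}`, are injective on `S_i`
modulo `S_{i-1}`, intertwine `W` and `V` on `S_i`, and whose images decompose
`ℂ^{β(x)}` as an internal direct sum. -/
def IsGradedIso (W V : RepSpace tl hd β) (l : ℕ)
    (S : Fin (l + 1) → ∀ x, Submodule ℂ (Fin (β x) → ℂ)) : Prop :=
  ∃ f : Fin l → ∀ x, (Fin (β x) → ℂ) →ₗ[ℂ] (Fin (β x) → ℂ),
    (∀ (i : Fin l) (x : Q0), ∀ v ∈ S i.castSucc x, f i x v = 0) ∧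
    (∀ (i : Fin l) (x : Q0), ∀ v ∈ S i.succ x, f i x v = 0 → v ∈ S i.castSucc x) ∧
    (∀ (i : Fin l) (a : Q1), ∀ v ∈ S i.succ (tl a),
      f i (hd a) ((W a).mulVec v) = (V a).mulVec (f i (tl a) v)) ∧
    (∀ x : Q0, iSupIndep fun i : Fin l => (S i.succ x).map (f i x)) ∧
    (∀ x : Q0, (⨆ i : Fin l, (S i.succ x).map (f i x)) = ⊤)


end

/-!
Let `S ⊆ W` be a subrepresentation with `σ(d_S) = 0`. Choosing a complement of `S` at every
vertex, the one-parameter subgroup acting by `1` on `S` and by `u` on the complement moves `W`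
to `W₀ + u⁻¹ B`, where `W₀ ≅ S ⊕ W/S`; so `W₀` lies in the orbit closure of `W`, and it is still
`σ`-semi-stable because `σ(d_S) = 0`. Polystability puts `W₀` in the orbit of `W`, so `S` has a
complementary subrepresentation `C`. For every `τ ∈ Ω(W)`, `τ(d_S) ≤ 0`, `τ(d_C) ≤ 0` and
`τ(d_S) + τ(d_C) = τ(β) = 0`, so `τ(d_S) = 0`: these equalities hold on the affine span of
`Ω(W)`. The remaining conditions `τ(d_S) ≤ 0`, with `σ(d_S) < 0`, are finitely many strict
inequalities at `σ`, so they hold on a neighbourhood of `σ`.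
-/

open MvPolynomial in
lemma _root_.MvPolynomial.eval_eq_zero_of_eval_add_smul_eq_zero {K ι : Type*} [Field K]
    [Infinite K] {p : MvPolynomial ι K} {v b : ι → K}
    (h : ∀ u : K, u ≠ 0 → eval (v + u • b) p = 0) :
    eval v p = 0 := by
  set q : Polynomial K := eval₂ Polynomial.C (fun i => .C (v i) + .C (b i) * .X) p
  have hq : ∀ u, q.eval u = eval (v + u • b) p := fun u => by
    simp only [q, polynomial_eval_eval₂]
    congr 1
    · ext; simp
    · ext i; simp [mul_comm (b i)]
  have hq0 : q = 0 := Polynomial.eq_zero_of_infinite_isRoot q <|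
    (Set.finite_singleton 0).infinite_compl.mono fun u hu => (hq u).trans (h u hu)
  have := hq 0
  rw [hq0] at this
  simpa using this.symm

lemma _root_.LinearMap.eq_zero_of_mem_affineSpan {k V M : Type*} [Ring k] [AddCommGroup V]
    [Module k V] [AddCommGroup M] [Module k M] {f : V →ₗ[k] M} {s : Set V}
    (hs : ∀ v ∈ s, f v = 0) {v : V} (hv : v ∈ affineSpan k s) : f v = 0 := by
  exact affineSpan_le (Q := (LinearMap.ker f).toAffineSubspace) |>.mpr hs hv

lemma _root_.mem_intrinsicInterior_of_affineSpan_inter_subset {k V P : Type*} [Ring k]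
    [AddCommGroup V] [Module k V] [TopologicalSpace P] [AddTorsor V P] {s U : Set P} {p : P}
    (hps : p ∈ s) (hU : IsOpen U) (hpU : p ∈ U) (hsU : ∀ q ∈ affineSpan k s, q ∈ U → q ∈ s) :
    p ∈ intrinsicInterior k s := by
  rw [mem_intrinsicInterior]
  refine ⟨⟨p, subset_affineSpan k s hps⟩, ?_, rfl⟩
  refine interior_maximal ?_ (hU.preimage continuous_subtype_val) hpU
  exact fun q hq => hsU q q.2 hq

lemma _root_.Submodule.finrank_map_add_finrank_inf_ker {K V V' : Type*} [DivisionRing K]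
    [AddCommGroup V] [Module K V] [AddCommGroup V'] [Module K V'] [FiniteDimensional K V]
    (f : V →ₗ[K] V') (U : Submodule K V) :
    Module.finrank K (U.map f) + Module.finrank K (U ⊓ LinearMap.ker f : Submodule K V) =
      Module.finrank K U := by
  have h := LinearMap.finrank_range_add_finrank_ker (f.domRestrict U)
  rwa [LinearMap.range_domRestrict, LinearMap.ker_domRestrict,
    ← Submodule.finrank_map_subtype_eq, Submodule.map_comap_subtype] at h

lemma _root_.IsIdempotentElem.add_smul_one_sub_mul {R A : Type*} [CommRing R] [Ring A]
    [Algebra R A] {e : A} (he : IsIdempotentElem e) (s t : R) :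
    (e + s • (1 - e)) * (e + t • (1 - e)) = e + (s * t) • (1 - e) := by
  simp only [mul_add, add_mul, smul_mul_assoc, mul_smul_comm, he.eq, he.mul_one_sub_self,
    he.one_sub_mul_self, he.one_sub.eq, smul_zero, add_zero, zero_add, smul_smul, mul_comm t s]

def _root_.IsIdempotentElem.scalingUnit {R A : Type*} [CommRing R] [Ring A] [Algebra R A]
    {e : A} (he : IsIdempotentElem e) (u : Rˣ) : Aˣ where
  val := e + (u : R) • (1 - e)
  inv := e + (↑u⁻¹ : R) • (1 - e)
  val_inv := by rw [he.add_smul_one_sub_mul, Units.mul_inv, one_smul, add_sub_cancel]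
  inv_val := by rw [he.add_smul_one_sub_mul, Units.inv_mul, one_smul, add_sub_cancel]

lemma _root_.IsIdempotentElem.mulVecLin {K n : Type*} [Field K] [Fintype n] [DecidableEq n]
    {E : Matrix n n K} (hE : IsIdempotentElem E) : IsIdempotentElem E.mulVecLin := by
  change E.mulVecLin ∘ₗ E.mulVecLin = E.mulVecLin
  rw [← Matrix.mulVecLin_mul, hE.eq]

lemma _root_.Matrix.exists_isIdempotentElem_range_mulVecLin_eq {K n : Type*} [Field K]
    [Fintype n] [DecidableEq n] (S : Submodule K (n → K)) :
    ∃ E : Matrix n n K, IsIdempotentElem E ∧ LinearMap.range E.mulVecLin = S := by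
  obtain ⟨C, hC⟩ := S.exists_isCompl
  refine ⟨LinearMap.toMatrix' (S.projection C hC), ?_, ?_⟩
  · rw [IsIdempotentElem, ← LinearMap.toMatrix'_mul, (Submodule.isIdempotentElem_projection hC).eq]
  · rw [← Matrix.toLin'_apply', Matrix.toLin'_toMatrix', Submodule.range_projection]

open scoped Matrix in
lemma _root_.Matrix.one_sub_mul_mul_eq_zero {K m n : Type*} [Field K] [Fintype m] [Fintype n]
    [DecidableEq m] [DecidableEq n] {P : Matrix n n K} {Q : Matrix m m K} {A : Matrix m n K}
    (hQ : IsIdempotentElem Q) (hA : ∀ v, A *ᵥ (P *ᵥ v) ∈ LinearMap.range Q.mulVecLin) :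
    (1 - Q) * A * P = 0 := by
  refine Matrix.ext_iff_mulVec.mpr fun v => ?_
  have hQv := (LinearMap.IsIdempotentElem.mem_range_iff hQ.mulVecLin).mp (hA v)
  simp only [Matrix.mulVecLin_apply] at hQv
  simp only [← Matrix.mulVec_mulVec, Matrix.sub_mulVec, Matrix.one_mulVec, Matrix.zero_mulVec,
    hQv, sub_self]

lemma _root_.Matrix.conj_add_smul_one_sub {K m n : Type*} [Field K] [Fintype m] [Fintype n]
    [DecidableEq m] [DecidableEq n] {P : Matrix n n K} {Q : Matrix m m K} {A : Matrix m n K}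
    (hA : (1 - Q) * A * P = 0) (u : Kˣ) :
    (Q + (u : K) • (1 - Q)) * A * (P + (↑u⁻¹ : K) • (1 - P)) =
      Q * A * P + (1 - Q) * A * (1 - P) + (↑u⁻¹ : K) • (Q * A * (1 - P)) := by
  simp only [Matrix.add_mul, Matrix.mul_add, Matrix.smul_mul, Matrix.mul_smul, hA, smul_zero,
    add_zero, smul_add, smul_smul, Units.inv_mul, one_smul]
  abel

section Weights

variable {Q0 : Type} [Fintype Q0]

lemma wt_add (σ : Q0 → ℝ) (γ₁ γ₂ : Q0 → ℕ) : wt σ (γ₁ + γ₂) = wt σ γ₁ + wt σ γ₂ := by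
  simp only [wt, Pi.add_apply, Nat.cast_add, mul_add, Finset.sum_add_distrib]

def wtLin (γ : Q0 → ℕ) : (Q0 → ℝ) →ₗ[ℝ] ℝ where
  toFun τ := wt τ γ
  map_add' _ _ := by simp only [wt, Pi.add_apply, add_mul, Finset.sum_add_distrib]
  map_smul' _ _ := by
    simp only [wt, Pi.smul_apply, smul_eq_mul, mul_assoc, ← Finset.mul_sum, RingHom.id_apply]

lemma isOpen_biInter_setOf_wt_neg {Γ : Set (Q0 → ℕ)} (hΓ : Γ.Finite) :
    IsOpen (⋂ γ ∈ Γ, {τ : Q0 → ℝ | wt τ γ < 0}) :=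
  hΓ.isOpen_biInter fun γ _ =>
    isOpen_lt (wtLin γ).continuous_of_finiteDimensional continuous_const

end Weights

section Graded

variable {Q0 Q1 : Type} {tl hd : Q1 → Q0} {β : Q0 → ℕ}

lemma mem_zClosure_of_forall_add_smul_mem {Z : Set (RepSpace tl hd β)} {V B : RepSpace tl hd β}
    (h : ∀ u : ℂ, u ≠ 0 → V + u • B ∈ Z) : V ∈ zClosure Z :=
  fun _ hp => MvPolynomial.eval_eq_zero_of_eval_add_smul_eq_zero (b := coordFn B) fun u hu => by
    have hcoord : coordFn V + u • coordFn B = coordFn (V + u • B) := rfl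
    rw [hcoord]
    exact hp _ (h u hu)

variable (E : ∀ x, Matrix (Fin (β x)) (Fin (β x)) ℂ) (W : RepSpace tl hd β)

def rangeFamily : ∀ x, Submodule ℂ (Fin (β x) → ℂ) := fun x => LinearMap.range (E x).mulVecLin

def kerFamily : ∀ x, Submodule ℂ (Fin (β x) → ℂ) := fun x => LinearMap.ker (E x).mulVecLin

/-- When `im E` is a subrepresentation `S`, this is `S ⊕ W/S`, written in the splittings
`ℂ^{β(x)} = im E x ⊕ ker E x`. -/
def gradedRep : RepSpace tl hd β :=
  fun a => E (hd a) * W a * E (tl a) + (1 - E (hd a)) * W a * (1 - E (tl a))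

def offDiagRep : RepSpace tl hd β := fun a => E (hd a) * W a * (1 - E (tl a))

variable {E W} (hE : ∀ x, IsIdempotentElem (E x))
include hE

lemma glAct_scalingUnit (hS : IsSubrep W (rangeFamily E)) (u : ℂˣ) :
    glAct (fun x => (hE x).scalingUnit u) W = gradedRep E W + (↑u⁻¹ : ℂ) • offDiagRep E W :=
  funext fun a => Matrix.conj_add_smul_one_sub
    (Matrix.one_sub_mul_mul_eq_zero (hE _) fun v => hS a _ ⟨v, rfl⟩) u

lemma gradedRep_mem_zClosure_glOrbit (hS : IsSubrep W (rangeFamily E)) :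
    gradedRep E W ∈ zClosure (glOrbit W) :=
  mem_zClosure_of_forall_add_smul_mem fun u hu =>
    ⟨fun x => (hE x).scalingUnit (Units.mk0 u hu)⁻¹,
      by rw [glAct_scalingUnit hE hS, inv_inv, Units.val_mk0]⟩

lemma mul_gradedRep (a : Q1) : E (hd a) * gradedRep E W a = E (hd a) * W a * E (tl a) := by
  simp only [gradedRep, Matrix.mul_add, ← Matrix.mul_assoc, (hE _).eq, (hE _).mul_one_sub_self,
    Matrix.zero_mul, add_zero]

lemma gradedRep_mul (a : Q1) : gradedRep E W a * E (tl a) = E (hd a) * W a * E (tl a) := by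
  simp only [gradedRep, Matrix.add_mul, Matrix.mul_assoc, (hE _).eq, (hE _).one_sub_mul_self,
    Matrix.mul_zero, add_zero]

lemma gradedRep_mul_one_sub (a : Q1) :
    gradedRep E W a * (1 - E (tl a)) = (1 - E (hd a)) * W a * (1 - E (tl a)) := by
  simp only [gradedRep, Matrix.add_mul, Matrix.mul_assoc, (hE _).one_sub.eq,
    (hE _).mul_one_sub_self, Matrix.mul_zero, zero_add]

lemma gradedRep_mul_eq_mul (hS : IsSubrep W (rangeFamily E)) (a : Q1) :
    gradedRep E W a * E (tl a) = W a * E (tl a) := by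
  have h := Matrix.one_sub_mul_mul_eq_zero (hE (hd a)) fun v => hS a _ ⟨v, rfl⟩
  rwa [Matrix.sub_mul, Matrix.sub_mul, Matrix.one_mul, sub_eq_zero, eq_comm,
    ← gradedRep_mul hE] at h

open scoped Matrix in
lemma isSubrep_gradedRep_kerFamily : IsSubrep (gradedRep E W) (kerFamily E) := by
  intro a v hv
  simp only [kerFamily, LinearMap.mem_ker, Matrix.mulVecLin_apply] at hv ⊢
  rw [Matrix.mulVec_mulVec, mul_gradedRep hE, ← gradedRep_mul hE, ← Matrix.mulVec_mulVec, hv,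
    Matrix.mulVec_zero]

open scoped Matrix in
lemma isSubrep_map_of_isSubrep_gradedRep (hS : IsSubrep W (rangeFamily E))
    {U : ∀ x, Submodule ℂ (Fin (β x) → ℂ)} (hU : IsSubrep (gradedRep E W) U) :
    IsSubrep W fun x => (U x).map (E x).mulVecLin := by
  rintro a _ ⟨u, hu, rfl⟩
  refine ⟨gradedRep E W a *ᵥ u, hU a u hu, ?_⟩
  simp only [Matrix.mulVecLin_apply, Matrix.mulVec_mulVec, mul_gradedRep hE,
    ← gradedRep_mul_eq_mul hE hS, gradedRep_mul hE]

open scoped Matrix in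
lemma isSubrep_sup_inf_kerFamily_of_isSubrep_gradedRep (hS : IsSubrep W (rangeFamily E))
    {U : ∀ x, Submodule ℂ (Fin (β x) → ℂ)} (hU : IsSubrep (gradedRep E W) U) :
    IsSubrep W fun x => rangeFamily E x ⊔ (U x ⊓ kerFamily E x) := by
  intro a v hv
  obtain ⟨s, hs, c, hc, rfl⟩ := Submodule.mem_sup.mp hv
  have hc0 : E (tl a) *ᵥ c = 0 := hc.2
  have hWc : W a *ᵥ c = gradedRep E W a *ᵥ c + E (hd a) *ᵥ (W a *ᵥ c) := by
    have h := congrArg (· *ᵥ c) (gradedRep_mul_one_sub hE (W := W) a)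
    simp only [← Matrix.mulVec_mulVec, Matrix.sub_mulVec, Matrix.one_mulVec, hc0, sub_zero] at h
    rw [h, sub_add_cancel]
  rw [Matrix.mulVec_add, hWc, ← add_assoc]
  refine Submodule.add_mem _ (Submodule.add_mem _ ?_ ?_) ?_
  · exact Submodule.mem_sup_left (hS a s hs)
  · exact Submodule.mem_sup_right ⟨hU a c hc.1, isSubrep_gradedRep_kerFamily hE a c hc.2⟩
  · exact Submodule.mem_sup_left ⟨_, rfl⟩

lemma semistable_gradedRep [Fintype Q0] {σ : Q0 → ℝ} (hS : IsSubrep W (rangeFamily E))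
    (hW : Semistable σ W) (hσ : wt σ (dimVec (rangeFamily E)) = 0) :
    Semistable σ (gradedRep E W) := by
  refine ⟨hW.1, fun U hU => ?_⟩
  set UK : ∀ x, Submodule ℂ (Fin (β x) → ℂ) := fun x => U x ⊓ kerFamily E x
  have hdimU : dimVec U = dimVec (fun x => (U x).map (E x).mulVecLin) + dimVec UK :=
    funext fun x => (Submodule.finrank_map_add_finrank_inf_ker _ _).symm
  have hdimExt :
      dimVec (fun x => rangeFamily E x ⊔ UK x) = dimVec (rangeFamily E) + dimVec UK := by
    funext x
    have hdisj : rangeFamily E x ⊓ UK x = ⊥ := eq_bot_iff.mpr fun v hv =>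
      (LinearMap.IsIdempotentElem.isCompl (hE x).mulVecLin).disjoint.le_bot ⟨hv.1, hv.2.2⟩
    have h := Submodule.finrank_sup_add_finrank_inf_eq (rangeFamily E x) (UK x)
    rwa [hdisj, finrank_bot, add_zero] at h
  have hIm := hW.2 _ (isSubrep_map_of_isSubrep_gradedRep hE hS hU)
  have hExt := hW.2 _ (isSubrep_sup_inf_kerFamily_of_isSubrep_gradedRep hE hS hU)
  rw [hdimExt, wt_add, hσ, zero_add] at hExt
  rw [hdimU, wt_add]
  linarith

end Graded

lemma _root_.Matrix.finrank_map_mulVecLin_units {K n : Type*} [Field K] [Fintype n]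
    [DecidableEq n] (g : (Matrix n n K)ˣ) (p : Submodule K (n → K)) :
    Module.finrank K (p.map (g : Matrix n n K).mulVecLin) = Module.finrank K p := by
  have hinj : Function.Injective (g : Matrix n n K).mulVecLin := fun v w h => by
    simpa [Matrix.mulVec_mulVec] using congrArg ((↑g⁻¹ : Matrix n n K).mulVec ·) h
  exact (Submodule.equivMapOfInjective _ hinj p).finrank_eq.symm

section Polystable

variable {Q0 Q1 : Type} {tl hd : Q1 → Q0} {β : Q0 → ℕ}

lemma dimVec_le [Fintype Q0] (S : ∀ x, Submodule ℂ (Fin (β x) → ℂ)) : dimVec S ≤ β :=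
  fun x => (Submodule.finrank_le (S x)).trans_eq (Module.finrank_fin_fun ℂ)

lemma isSubrep_map_inv_of_isSubrep_glAct {g : ∀ x, GL (Fin (β x)) ℂ} {W : RepSpace tl hd β}
    {K : ∀ x, Submodule ℂ (Fin (β x) → ℂ)} (hK : IsSubrep (glAct g W) K) :
    IsSubrep W fun x => (K x).map (↑(g x)⁻¹ : Matrix (Fin (β x)) (Fin (β x)) ℂ).mulVecLin := by
  rintro a _ ⟨v, hv, rfl⟩
  refine ⟨(glAct g W a).mulVec v, hK a v hv, ?_⟩
  simp only [glAct, Matrix.mulVecLin_apply, Matrix.mulVec_mulVec, ← Matrix.mul_assoc,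
    Units.inv_mul, Matrix.one_mul]

lemma exists_isSubrep_dimVec_add_eq_of_polystable [Fintype Q0] {σ : Q0 → ℝ}
    {W : RepSpace tl hd β} (hW : Polystable σ W) {S : ∀ x, Submodule ℂ (Fin (β x) → ℂ)}
    (hS : IsSubrep W S) (hσ : wt σ (dimVec S) = 0) :
    ∃ C, IsSubrep W C ∧ dimVec S + dimVec C = β := by
  choose E hE hES using fun x => Matrix.exists_isIdempotentElem_range_mulVecLin_eq (S x)
  obtain rfl : S = rangeFamily E := funext fun x => (hES x).symm
  obtain ⟨g, hg⟩ : gradedRep E W ∈ glOrbit W :=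
    hW.2 ▸ ⟨gradedRep_mem_zClosure_glOrbit hE hS, semistable_gradedRep hE hS hW.1 hσ⟩
  refine ⟨_, isSubrep_map_inv_of_isSubrep_glAct (hg ▸ isSubrep_gradedRep_kerFamily hE),
    funext fun x => ?_⟩
  have h := LinearMap.finrank_range_add_finrank_ker (E x).mulVecLin
  rw [Module.finrank_fin_fun] at h
  simp only [Pi.add_apply, dimVec]
  rwa [Matrix.finrank_map_mulVecLin_units]

lemma wt_dimVec_eq_zero_of_polystable [Fintype Q0] {σ τ : Q0 → ℝ} {W : RepSpace tl hd β}
    (hW : Polystable σ W) {S : ∀ x, Submodule ℂ (Fin (β x) → ℂ)} (hS : IsSubrep W S)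
    (hσ : wt σ (dimVec S) = 0) (hτ : Semistable τ W) : wt τ (dimVec S) = 0 := by
  obtain ⟨C, hC, hSC⟩ := exists_isSubrep_dimVec_add_eq_of_polystable hW hS hσ
  have hβ := hτ.1
  rw [← hSC, wt_add] at hβ
  linarith [hτ.2 S hS, hτ.2 C hC]

end Polystable

noncomputable section

variable {Q0 Q1 : Type} [Fintype Q0] [Fintype Q1]

variable {tl hd : Q1 → Q0} {β : Q0 → ℕ}

theorem polystable_weight_in_relint_orbit_cone_general
    (σ : Q0 → ℝ)
    (W : RepSpace tl hd β) (hW : Polystable σ W) :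
    σ ∈ intrinsicInterior ℝ (OmegaCone W) := by
  classical
  set Γ : Set (Q0 → ℕ) := {γ | ∃ S, IsSubrep W S ∧ dimVec S = γ ∧ wt σ γ < 0}
  have hΓ : Γ.Finite := (Set.finite_Iic β).subset fun _ ⟨S, _, hγ, _⟩ => hγ ▸ dimVec_le S
  refine mem_intrinsicInterior_of_affineSpan_inter_subset hW.1 (isOpen_biInter_setOf_wt_neg hΓ)
    (Set.mem_iInter₂.mpr fun _ ⟨_, _, _, hneg⟩ => hneg) fun τ hτ hτΓ => ⟨?_, fun S hS => ?_⟩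
  · exact LinearMap.eq_zero_of_mem_affineSpan (f := wtLin β) (fun τ' hτ' => hτ'.1) hτ
  rcases (hW.1.2 S hS).lt_or_eq with hlt | heq
  · exact (Set.mem_iInter₂.mp hτΓ _ ⟨S, hS, rfl, hlt⟩).le
  · exact (LinearMap.eq_zero_of_mem_affineSpan (f := wtLin (dimVec S))
      (fun τ' hτ' => wt_dimVec_eq_zero_of_polystable hW hS heq hτ') hτ).le

/-- If `σ ∈ C(Q,β)` and `W` is `σ`-polystable, then `σ` lies in the
relative interior of the orbit cone `Ω(W)`. -/
theorem polystable_weight_in_relint_orbit_cone (hQ : NoOrientedCycles tl hd)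
    (σ : Q0 → ℝ) (hσ : σ ∈ EffCone tl hd β)
    (W : RepSpace tl hd β) (hW : Polystable σ W) :
    σ ∈ intrinsicInterior ℝ (OmegaCone W) :=
  polystable_weight_in_relint_orbit_cone_general σ W hW

end

end QuiverGIT
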